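/- arXiv:2209.03114 — 4 statements merged into one kernel-verified Lean document; each statement's English description precedes it below -/
import Mathlib

section
/- Fix x' ∈ ℝ³ with x' ≠ 0 and ℳ' ∈ ℝ. Consider the asymmetric two-centre Hamiltonian J(y,x) = ‖y‖²/2 − 1/‖x‖ − ℳ'/‖x'−x‖ on the open set of (y,x) ∈ ℝ³×ℝ³ with x ≠ 0 and x ≠ x'. Let M = x×y and L = y×M − x/‖x‖ (the angular momentum and eccentricity vector of the Kepler problem). Then the Euler integral E(y,x) = ‖M‖² − x'·L + ℳ'((x'−x)·x')/‖x'−x‖ Poisson-commutes with J: {J, E} = 0 identically on this set. -/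
open Matrix

/-- Partial gradient component in the momentum variable `y`. -/
noncomputable def pdY (f : (Fin 3 → ℝ) → (Fin 3 → ℝ) → ℝ) (y x : Fin 3 → ℝ) (i : Fin 3) : ℝ :=
  fderiv ℝ (fun w => f w x) y (Pi.single i 1)

/-- Partial gradient component in the position variable `x`. -/
noncomputable def pdX (f : (Fin 3 → ℝ) → (Fin 3 → ℝ) → ℝ) (y x : Fin 3 → ℝ) (i : Fin 3) : ℝ :=
  fderiv ℝ (fun w => f y w) x (Pi.single i 1)

/-- Poisson bracket {f,g} = ∇_y f·∇ₓg − ∇ₓf·∇_y g, `y` the momentum conjugate to `x`. -/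
noncomputable def poisson (f g : (Fin 3 → ℝ) → (Fin 3 → ℝ) → ℝ) (y x : Fin 3 → ℝ) : ℝ :=
  (fun i => pdY f y x i) ⬝ᵥ (fun i => pdX g y x i)
    - (fun i => pdX f y x i) ⬝ᵥ (fun i => pdY g y x i)

/-- Euclidean norm on ℝ³. -/
noncomputable def enorm3 (v : Fin 3 → ℝ) : ℝ := Real.sqrt (v ⬝ᵥ v)

section EulerAux

set_option maxHeartbeats 1000000

/-- The continuous linear map `v ↦ a ⬝ᵥ v` on `ℝ³`. -/
noncomputable def dCLM (a : Fin 3 → ℝ) : (Fin 3 → ℝ) →L[ℝ] ℝ :=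
  a 0 • ContinuousLinearMap.proj 0 + a 1 • ContinuousLinearMap.proj 1 +
    a 2 • ContinuousLinearMap.proj 2

@[simp] lemma dCLM_apply (a v : Fin 3 → ℝ) :
    dCLM a v = a 0 * v 0 + a 1 * v 1 + a 2 * v 2 := by
  simp [dCLM]

lemma dCLM_single (a : Fin 3 → ℝ) (i : Fin 3) : dCLM a (Pi.single i 1) = a i := by
  fin_cases i <;> simp

lemma hasFDerivAt_coord (i : Fin 3) (p : Fin 3 → ℝ) :
    HasFDerivAt (fun w : Fin 3 → ℝ => w i)
      (ContinuousLinearMap.proj i : (Fin 3 → ℝ) →L[ℝ] ℝ) p :=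
  (ContinuousLinearMap.proj (R := ℝ) (φ := fun _ : Fin 3 => ℝ) i).hasFDerivAt

lemma dot_self_pos (p : Fin 3 → ℝ) (hp : p ≠ 0) : 0 < p ⬝ᵥ p := by
  have h : p 0 ≠ 0 ∨ p 1 ≠ 0 ∨ p 2 ≠ 0 := by
    by_contra h
    push_neg at h
    exact hp (funext fun j => by fin_cases j <;> simp [h.1, h.2.1, h.2.2])
  have e : p ⬝ᵥ p = p 0 * p 0 + p 1 * p 1 + p 2 * p 2 := by
    simp [dotProduct, Fin.sum_univ_three]
  rw [e]
  rcases h with h | h | h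
  · nlinarith [mul_self_pos.mpr h, mul_self_nonneg (p 1), mul_self_nonneg (p 2)]
  · nlinarith [mul_self_pos.mpr h, mul_self_nonneg (p 0), mul_self_nonneg (p 2)]
  · nlinarith [mul_self_pos.mpr h, mul_self_nonneg (p 0), mul_self_nonneg (p 1)]

lemma enorm3_pos (p : Fin 3 → ℝ) (hp : p ≠ 0) : 0 < enorm3 p :=
  Real.sqrt_pos.mpr (dot_self_pos p hp)

lemma sq_enorm3 (p : Fin 3 → ℝ) : enorm3 p ^ 2 = p ⬝ᵥ p := by
  have : 0 ≤ p ⬝ᵥ p := by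
    have e : p ⬝ᵥ p = p 0 * p 0 + p 1 * p 1 + p 2 * p 2 := by
      simp [dotProduct, Fin.sum_univ_three]
    nlinarith [mul_self_nonneg (p 0), mul_self_nonneg (p 1), mul_self_nonneg (p 2)]
  rw [enorm3, Real.sq_sqrt this]

lemma hasFDerivAt_dotself (p : Fin 3 → ℝ) :
    HasFDerivAt (fun w : Fin 3 → ℝ => w ⬝ᵥ w) (dCLM ((2:ℝ) • p)) p := by
  have e : (fun w : Fin 3 → ℝ => w ⬝ᵥ w)
      = fun w => w 0 * w 0 + w 1 * w 1 + w 2 * w 2 := by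
    funext w; simp [dotProduct, Fin.sum_univ_three]
  rw [e]
  have h := (((hasFDerivAt_coord 0 p).mul (hasFDerivAt_coord 0 p)).add
      ((hasFDerivAt_coord 1 p).mul (hasFDerivAt_coord 1 p))).add
      ((hasFDerivAt_coord 2 p).mul (hasFDerivAt_coord 2 p))
  refine h.congr_fderiv ?_
  refine ContinuousLinearMap.ext fun v => ?_
  simp
  ring

lemma hasFDerivAt_enorm3 (p : Fin 3 → ℝ) (hp : p ≠ 0) :
    HasFDerivAt enorm3 (dCLM ((enorm3 p)⁻¹ • p)) p := by
  have h := (hasFDerivAt_dotself p).sqrt (ne_of_gt (dot_self_pos p hp))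
  refine h.congr_fderiv ?_
  refine ContinuousLinearMap.ext fun v => ?_
  have hr : Real.sqrt (p ⬝ᵥ p) ≠ 0 := ne_of_gt (enorm3_pos p hp)
  simp [enorm3]
  field_simp

lemma gradInvEnorm (x : Fin 3 → ℝ) (hx : x ≠ 0) :
    HasFDerivAt (fun w : Fin 3 → ℝ => (enorm3 w)⁻¹)
      (dCLM ((-(enorm3 x)⁻¹ / (x ⬝ᵥ x)) • x)) x := by
  have h := (hasDerivAt_inv (ne_of_gt (enorm3_pos x hx))).comp_hasFDerivAt x
      (hasFDerivAt_enorm3 x hx)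
  refine h.congr_fderiv ?_
  refine ContinuousLinearMap.ext fun v => ?_
  have h2 := sq_enorm3 x
  have hr := ne_of_gt (enorm3_pos x hx)
  have hX := ne_of_gt (dot_self_pos x hx)
  simp [← h2]
  field_simp
  ring

lemma gradEnormSub (u x : Fin 3 → ℝ) (hux : u - x ≠ 0) :
    HasFDerivAt (fun w : Fin 3 → ℝ => enorm3 (u - w))
      (dCLM (-(enorm3 (u - x))⁻¹ • (u - x))) x := by
  have hsub : HasFDerivAt (fun w : Fin 3 → ℝ => u - w)
      ((0 : (Fin 3 → ℝ) →L[ℝ] (Fin 3 → ℝ)) - ContinuousLinearMap.id ℝ (Fin 3 → ℝ)) x :=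
    (hasFDerivAt_const u x).sub (hasFDerivAt_id x)
  have h := (hasFDerivAt_enorm3 (u - x) hux).comp x hsub
  refine h.congr_fderiv ?_
  refine ContinuousLinearMap.ext fun v => ?_
  simp
  ring

lemma gradInvEnormSub (u x : Fin 3 → ℝ) (hux : u - x ≠ 0) :
    HasFDerivAt (fun w : Fin 3 → ℝ => (enorm3 (u - w))⁻¹)
      (dCLM (((enorm3 (u - x))⁻¹ / ((u - x) ⬝ᵥ (u - x))) • (u - x))) x := by
  have h := (hasDerivAt_inv (ne_of_gt (enorm3_pos (u - x) hux))).comp_hasFDerivAt x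
      (gradEnormSub u x hux)
  refine h.congr_fderiv ?_
  refine ContinuousLinearMap.ext fun v => ?_
  have h2 := sq_enorm3 (u - x)
  have hs := ne_of_gt (enorm3_pos (u - x) hux)
  have hS := ne_of_gt (dot_self_pos (u - x) hux)
  simp [← h2]
  field_simp
  ring

lemma gradJ_y (y x u : Fin 3 → ℝ) (M' : ℝ) :
    HasFDerivAt (fun w : Fin 3 → ℝ => w ⬝ᵥ w / 2 - 1 / enorm3 x - M' / enorm3 (u - x))
      (dCLM y) y := by
  have e : (fun w : Fin 3 → ℝ => w ⬝ᵥ w / 2 - 1 / enorm3 x - M' / enorm3 (u - x))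
      = fun w : Fin 3 → ℝ => (2:ℝ)⁻¹ * (w ⬝ᵥ w) - 1 / enorm3 x - M' / enorm3 (u - x) := by
    funext w; ring
  rw [e]
  have h := (((hasFDerivAt_dotself y).const_mul ((2:ℝ)⁻¹)).sub_const
      (1 / enorm3 x)).sub_const (M' / enorm3 (u - x))
  refine h.congr_fderiv ?_
  refine ContinuousLinearMap.ext fun v => ?_
  simp
  ring

lemma gradJ_x (y x u : Fin 3 → ℝ) (M' : ℝ) (hx : x ≠ 0) (hux : u - x ≠ 0) :
    HasFDerivAt (fun w : Fin 3 → ℝ => y ⬝ᵥ y / 2 - 1 / enorm3 w - M' / enorm3 (u - w))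
      (dCLM ![(enorm3 x)⁻¹ / (x ⬝ᵥ x) * x 0
          - M' * (enorm3 (u - x))⁻¹ / ((u - x) ⬝ᵥ (u - x)) * (u 0 - x 0),
        (enorm3 x)⁻¹ / (x ⬝ᵥ x) * x 1
          - M' * (enorm3 (u - x))⁻¹ / ((u - x) ⬝ᵥ (u - x)) * (u 1 - x 1),
        (enorm3 x)⁻¹ / (x ⬝ᵥ x) * x 2
          - M' * (enorm3 (u - x))⁻¹ / ((u - x) ⬝ᵥ (u - x)) * (u 2 - x 2)]) x := by
  have e : (fun w : Fin 3 → ℝ => y ⬝ᵥ y / 2 - 1 / enorm3 w - M' / enorm3 (u - w))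
      = fun w : Fin 3 → ℝ => y ⬝ᵥ y / 2 - (enorm3 w)⁻¹ - M' * (enorm3 (u - w))⁻¹ := by
    funext w; ring
  rw [e]
  have h := ((hasFDerivAt_const (y ⬝ᵥ y / 2) x).sub (gradInvEnorm x hx)).sub
      ((gradInvEnormSub u x hux).const_mul M')
  refine h.congr_fderiv ?_
  refine ContinuousLinearMap.ext fun v => ?_
  simp [Pi.smul_apply, smul_eq_mul]
  ring
lemma gradE_y (y x u : Fin 3 → ℝ) (M' : ℝ) :
    HasFDerivAt (fun w : Fin 3 → ℝ =>
        ((crossProduct x) w ⬝ᵥ (crossProduct x) w)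
          - (u ⬝ᵥ ((crossProduct w) ((crossProduct x) w) - (enorm3 x)⁻¹ • x))
          + M' * (((u - x) ⬝ᵥ u) / enorm3 (u - x)))
      (dCLM ![2 * ((x 2 * y 0 - x 0 * y 2) * x 2 - (x 0 * y 1 - x 1 * y 0) * x 1)
              - ((x 2 * y 0 - x 0 * y 2) * u 2 - (x 0 * y 1 - x 1 * y 0) * u 1)
              - ((u 2 * y 0 - u 0 * y 2) * x 2 - (u 0 * y 1 - u 1 * y 0) * x 1),
            2 * ((x 0 * y 1 - x 1 * y 0) * x 0 - (x 1 * y 2 - x 2 * y 1) * x 2)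
              - ((x 0 * y 1 - x 1 * y 0) * u 0 - (x 1 * y 2 - x 2 * y 1) * u 2)
              - ((u 0 * y 1 - u 1 * y 0) * x 0 - (u 1 * y 2 - u 2 * y 1) * x 2),
            2 * ((x 1 * y 2 - x 2 * y 1) * x 1 - (x 2 * y 0 - x 0 * y 2) * x 0)
              - ((x 1 * y 2 - x 2 * y 1) * u 1 - (x 2 * y 0 - x 0 * y 2) * u 0)
              - ((u 1 * y 2 - u 2 * y 1) * x 1 - (u 2 * y 0 - u 0 * y 2) * x 0)]) y := by
  have e : (fun w : Fin 3 → ℝ =>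
        ((crossProduct x) w ⬝ᵥ (crossProduct x) w)
          - (u ⬝ᵥ ((crossProduct w) ((crossProduct x) w) - (enorm3 x)⁻¹ • x))
          + M' * (((u - x) ⬝ᵥ u) / enorm3 (u - x)))
      = fun w : Fin 3 → ℝ =>
        ((x 1 * w 2 - x 2 * w 1) * (x 1 * w 2 - x 2 * w 1)
          + (x 2 * w 0 - x 0 * w 2) * (x 2 * w 0 - x 0 * w 2)
          + (x 0 * w 1 - x 1 * w 0) * (x 0 * w 1 - x 1 * w 0))
        - (u 0 * (w 1 * (x 0 * w 1 - x 1 * w 0) - w 2 * (x 2 * w 0 - x 0 * w 2))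
          + u 1 * (w 2 * (x 1 * w 2 - x 2 * w 1) - w 0 * (x 0 * w 1 - x 1 * w 0))
          + u 2 * (w 0 * (x 2 * w 0 - x 0 * w 2) - w 1 * (x 1 * w 2 - x 2 * w 1)))
        + ((enorm3 x)⁻¹ * (u 0 * x 0 + u 1 * x 1 + u 2 * x 2)
          + M' * (((u 0 - x 0) * u 0 + (u 1 - x 1) * u 1 + (u 2 - x 2) * u 2)
              / enorm3 (u - x))) := by
    funext w
    simp [cross_apply, dotProduct, Fin.sum_univ_three]
    ring
  rw [e]
  have h0 := hasFDerivAt_coord 0 y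
  have h1 := hasFDerivAt_coord 1 y
  have h2 := hasFDerivAt_coord 2 y
  have hA0 := (h2.const_mul (x 1)).sub (h1.const_mul (x 2))
  have hA1 := (h0.const_mul (x 2)).sub (h2.const_mul (x 0))
  have hA2 := (h1.const_mul (x 0)).sub (h0.const_mul (x 1))
  have hb0 := (h1.mul hA2).sub (h2.mul hA1)
  have hb1 := (h2.mul hA0).sub (h0.mul hA2)
  have hb2 := (h0.mul hA1).sub (h1.mul hA0)
  have h := ((((hA0.mul hA0).add (hA1.mul hA1)).add (hA2.mul hA2)).sub
      (((hb0.const_mul (u 0)).add (hb1.const_mul (u 1))).add (hb2.const_mul (u 2)))).add_const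
      ((enorm3 x)⁻¹ * (u 0 * x 0 + u 1 * x 1 + u 2 * x 2)
        + M' * (((u 0 - x 0) * u 0 + (u 1 - x 1) * u 1 + (u 2 - x 2) * u 2) / enorm3 (u - x)))
  refine h.congr_fderiv ?_
  refine ContinuousLinearMap.ext fun v => ?_
  simp
  ring

lemma gradE_x (y x u : Fin 3 → ℝ) (M' : ℝ) (hx : x ≠ 0) (hux : u - x ≠ 0) :
    HasFDerivAt (fun w : Fin 3 → ℝ =>
        ((crossProduct w) y ⬝ᵥ (crossProduct w) y)
          - (u ⬝ᵥ ((crossProduct y) ((crossProduct w) y) - (enorm3 w)⁻¹ • w))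
          + M' * (((u - w) ⬝ᵥ u) / enorm3 (u - w)))
      (dCLM ![2 * (y 1 * (x 0 * y 1 - x 1 * y 0) - y 2 * (x 2 * y 0 - x 0 * y 2))
              - (y 1 * (u 0 * y 1 - u 1 * y 0) - y 2 * (u 2 * y 0 - u 0 * y 2))
              + (enorm3 x)⁻¹ * u 0 - (u ⬝ᵥ x) * (enorm3 x)⁻¹ / (x ⬝ᵥ x) * x 0
              - M' * (enorm3 (u - x))⁻¹ * u 0
              + M' * (u ⬝ᵥ u - x ⬝ᵥ u) * (enorm3 (u - x))⁻¹ / ((u - x) ⬝ᵥ (u - x))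
                  * (u 0 - x 0),
            2 * (y 2 * (x 1 * y 2 - x 2 * y 1) - y 0 * (x 0 * y 1 - x 1 * y 0))
              - (y 2 * (u 1 * y 2 - u 2 * y 1) - y 0 * (u 0 * y 1 - u 1 * y 0))
              + (enorm3 x)⁻¹ * u 1 - (u ⬝ᵥ x) * (enorm3 x)⁻¹ / (x ⬝ᵥ x) * x 1
              - M' * (enorm3 (u - x))⁻¹ * u 1
              + M' * (u ⬝ᵥ u - x ⬝ᵥ u) * (enorm3 (u - x))⁻¹ / ((u - x) ⬝ᵥ (u - x))
                  * (u 1 - x 1),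
            2 * (y 0 * (x 2 * y 0 - x 0 * y 2) - y 1 * (x 1 * y 2 - x 2 * y 1))
              - (y 0 * (u 2 * y 0 - u 0 * y 2) - y 1 * (u 1 * y 2 - u 2 * y 1))
              + (enorm3 x)⁻¹ * u 2 - (u ⬝ᵥ x) * (enorm3 x)⁻¹ / (x ⬝ᵥ x) * x 2
              - M' * (enorm3 (u - x))⁻¹ * u 2
              + M' * (u ⬝ᵥ u - x ⬝ᵥ u) * (enorm3 (u - x))⁻¹ / ((u - x) ⬝ᵥ (u - x))
                  * (u 2 - x 2)]) x := by
  have e : (fun w : Fin 3 → ℝ =>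
        ((crossProduct w) y ⬝ᵥ (crossProduct w) y)
          - (u ⬝ᵥ ((crossProduct y) ((crossProduct w) y) - (enorm3 w)⁻¹ • w))
          + M' * (((u - w) ⬝ᵥ u) / enorm3 (u - w)))
      = fun w : Fin 3 → ℝ =>
        ((y 2 * w 1 - y 1 * w 2) * (y 2 * w 1 - y 1 * w 2)
          + (y 0 * w 2 - y 2 * w 0) * (y 0 * w 2 - y 2 * w 0)
          + (y 1 * w 0 - y 0 * w 1) * (y 1 * w 0 - y 0 * w 1))
        - (u 0 * (y 1 * (y 1 * w 0 - y 0 * w 1) - y 2 * (y 0 * w 2 - y 2 * w 0))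
          + u 1 * (y 2 * (y 2 * w 1 - y 1 * w 2) - y 0 * (y 1 * w 0 - y 0 * w 1))
          + u 2 * (y 0 * (y 0 * w 2 - y 2 * w 0) - y 1 * (y 2 * w 1 - y 1 * w 2)))
        + ((enorm3 w)⁻¹ * (u 0 * w 0 + u 1 * w 1 + u 2 * w 2)
          + M' * ((u 0 * u 0 + u 1 * u 1 + u 2 * u 2
              - (u 0 * w 0 + u 1 * w 1 + u 2 * w 2)) * (enorm3 (u - w))⁻¹)) := by
    funext w
    simp [cross_apply, dotProduct, Fin.sum_univ_three]
    ring
  rw [e]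
  have h0 := hasFDerivAt_coord 0 x
  have h1 := hasFDerivAt_coord 1 x
  have h2 := hasFDerivAt_coord 2 x
  have hA0 := (h1.const_mul (y 2)).sub (h2.const_mul (y 1))
  have hA1 := (h2.const_mul (y 0)).sub (h0.const_mul (y 2))
  have hA2 := (h0.const_mul (y 1)).sub (h1.const_mul (y 0))
  have hb0 := (hA2.const_mul (y 1)).sub (hA1.const_mul (y 2))
  have hb1 := (hA0.const_mul (y 2)).sub (hA2.const_mul (y 0))
  have hb2 := (hA1.const_mul (y 0)).sub (hA0.const_mul (y 1))
  have hlin := ((h0.const_mul (u 0)).add (h1.const_mul (u 1))).add (h2.const_mul (u 2))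
  have hC1 := (gradInvEnorm x hx).mul hlin
  have hC2 := (((hasFDerivAt_const (u 0 * u 0 + u 1 * u 1 + u 2 * u 2) x).sub hlin).mul
      (gradInvEnormSub u x hux)).const_mul M'
  have h := ((((hA0.mul hA0).add (hA1.mul hA1)).add (hA2.mul hA2)).sub
      (((hb0.const_mul (u 0)).add (hb1.const_mul (u 1))).add (hb2.const_mul (u 2)))).add
      (hC1.add hC2)
  refine h.congr_fderiv ?_
  refine ContinuousLinearMap.ext fun v => ?_
  have hXv : ((u - x) ⬝ᵥ (u - x)) = (u - x) ⬝ᵥ (u - x) := rfl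
  simp [Pi.sub_apply, Pi.smul_apply, smul_eq_mul, dotProduct, Fin.sum_univ_three]
  ring

end EulerAux

lemma pdY_eq' {f : (Fin 3 → ℝ) → (Fin 3 → ℝ) → ℝ} {y x : Fin 3 → ℝ}
    {L : (Fin 3 → ℝ) →L[ℝ] ℝ} (h : HasFDerivAt (fun w => f w x) L y) (i : Fin 3) :
    pdY f y x i = L (Pi.single i 1) := by
  simp only [pdY]; rw [h.fderiv]

lemma pdX_eq' {f : (Fin 3 → ℝ) → (Fin 3 → ℝ) → ℝ} {y x : Fin 3 → ℝ}
    {L : (Fin 3 → ℝ) →L[ℝ] ℝ} (h : HasFDerivAt (fun w => f y w) L x) (i : Fin 3) :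
    pdX f y x i = L (Pi.single i 1) := by
  simp only [pdX]; rw [h.fderiv]

set_option maxHeartbeats 2000000 in
/-- The Euler integral E = ‖M‖² − x'·L + ℳ'((x'−x)·x')/‖x'−x‖ Poisson-commutes with the
asymmetric two-centre Hamiltonian J = ‖y‖²/2 − 1/‖x‖ − ℳ'/‖x'−x‖. -/
theorem euler_integral_asymmetric_two_centre
    (x' : Fin 3 → ℝ) (hx' : x' ≠ 0) (M' : ℝ) :
    ∀ y x : Fin 3 → ℝ, x ≠ 0 → x ≠ x' →
      poisson
        (fun y x => (y ⬝ᵥ y) / 2 - 1 / enorm3 x - M' / enorm3 (x' - x))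
        (fun y x =>
          ((crossProduct x) y ⬝ᵥ (crossProduct x) y)
            - (x' ⬝ᵥ ((crossProduct y) ((crossProduct x) y) - (enorm3 x)⁻¹ • x))
            + M' * (((x' - x) ⬝ᵥ x') / enorm3 (x' - x)))
        y x = 0 := by
  intro y x hx hxx
  have hux : x' - x ≠ 0 := sub_ne_zero.mpr (Ne.symm hxx)
  have hr := enorm3_pos x hx
  have hs := enorm3_pos (x' - x) hux
  have hX := dot_self_pos x hx
  have hS := dot_self_pos (x' - x) hux
  have EJy : ∀ i, pdY (fun y x => (y ⬝ᵥ y) / 2 - 1 / enorm3 x - M' / enorm3 (x' - x)) y x i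
      = y i :=
    fun i => (pdY_eq' (gradJ_y y x x' M') i).trans (dCLM_single y i)
  have EJx : ∀ i, pdX (fun y x => (y ⬝ᵥ y) / 2 - 1 / enorm3 x - M' / enorm3 (x' - x)) y x i
      = ![(enorm3 x)⁻¹ / (x ⬝ᵥ x) * x 0
          - M' * (enorm3 (x' - x))⁻¹ / ((x' - x) ⬝ᵥ (x' - x)) * (x' 0 - x 0),
        (enorm3 x)⁻¹ / (x ⬝ᵥ x) * x 1
          - M' * (enorm3 (x' - x))⁻¹ / ((x' - x) ⬝ᵥ (x' - x)) * (x' 1 - x 1),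
        (enorm3 x)⁻¹ / (x ⬝ᵥ x) * x 2
          - M' * (enorm3 (x' - x))⁻¹ / ((x' - x) ⬝ᵥ (x' - x)) * (x' 2 - x 2)] i :=
    fun i => (pdX_eq' (gradJ_x y x x' M' hx hux) i).trans (dCLM_single _ i)
  have EEy : ∀ i, pdY (fun y x =>
        ((crossProduct x) y ⬝ᵥ (crossProduct x) y)
          - (x' ⬝ᵥ ((crossProduct y) ((crossProduct x) y) - (enorm3 x)⁻¹ • x))
          + M' * (((x' - x) ⬝ᵥ x') / enorm3 (x' - x))) y x i
      = ![2 * ((x 2 * y 0 - x 0 * y 2) * x 2 - (x 0 * y 1 - x 1 * y 0) * x 1)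
              - ((x 2 * y 0 - x 0 * y 2) * x' 2 - (x 0 * y 1 - x 1 * y 0) * x' 1)
              - ((x' 2 * y 0 - x' 0 * y 2) * x 2 - (x' 0 * y 1 - x' 1 * y 0) * x 1),
            2 * ((x 0 * y 1 - x 1 * y 0) * x 0 - (x 1 * y 2 - x 2 * y 1) * x 2)
              - ((x 0 * y 1 - x 1 * y 0) * x' 0 - (x 1 * y 2 - x 2 * y 1) * x' 2)
              - ((x' 0 * y 1 - x' 1 * y 0) * x 0 - (x' 1 * y 2 - x' 2 * y 1) * x 2),
            2 * ((x 1 * y 2 - x 2 * y 1) * x 1 - (x 2 * y 0 - x 0 * y 2) * x 0)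
              - ((x 1 * y 2 - x 2 * y 1) * x' 1 - (x 2 * y 0 - x 0 * y 2) * x' 0)
              - ((x' 1 * y 2 - x' 2 * y 1) * x 1 - (x' 2 * y 0 - x' 0 * y 2) * x 0)] i :=
    fun i => (pdY_eq' (gradE_y y x x' M') i).trans (dCLM_single _ i)
  have EEx : ∀ i, pdX (fun y x =>
        ((crossProduct x) y ⬝ᵥ (crossProduct x) y)
          - (x' ⬝ᵥ ((crossProduct y) ((crossProduct x) y) - (enorm3 x)⁻¹ • x))
          + M' * (((x' - x) ⬝ᵥ x') / enorm3 (x' - x))) y x i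
      = ![2 * (y 1 * (x 0 * y 1 - x 1 * y 0) - y 2 * (x 2 * y 0 - x 0 * y 2))
              - (y 1 * (x' 0 * y 1 - x' 1 * y 0) - y 2 * (x' 2 * y 0 - x' 0 * y 2))
              + (enorm3 x)⁻¹ * x' 0 - (x' ⬝ᵥ x) * (enorm3 x)⁻¹ / (x ⬝ᵥ x) * x 0
              - M' * (enorm3 (x' - x))⁻¹ * x' 0
              + M' * (x' ⬝ᵥ x' - x ⬝ᵥ x') * (enorm3 (x' - x))⁻¹ / ((x' - x) ⬝ᵥ (x' - x))
                  * (x' 0 - x 0),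
            2 * (y 2 * (x 1 * y 2 - x 2 * y 1) - y 0 * (x 0 * y 1 - x 1 * y 0))
              - (y 2 * (x' 1 * y 2 - x' 2 * y 1) - y 0 * (x' 0 * y 1 - x' 1 * y 0))
              + (enorm3 x)⁻¹ * x' 1 - (x' ⬝ᵥ x) * (enorm3 x)⁻¹ / (x ⬝ᵥ x) * x 1
              - M' * (enorm3 (x' - x))⁻¹ * x' 1
              + M' * (x' ⬝ᵥ x' - x ⬝ᵥ x') * (enorm3 (x' - x))⁻¹ / ((x' - x) ⬝ᵥ (x' - x))
                  * (x' 1 - x 1),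
            2 * (y 0 * (x 2 * y 0 - x 0 * y 2) - y 1 * (x 1 * y 2 - x 2 * y 1))
              - (y 0 * (x' 2 * y 0 - x' 0 * y 2) - y 1 * (x' 1 * y 2 - x' 2 * y 1))
              + (enorm3 x)⁻¹ * x' 2 - (x' ⬝ᵥ x) * (enorm3 x)⁻¹ / (x ⬝ᵥ x) * x 2
              - M' * (enorm3 (x' - x))⁻¹ * x' 2
              + M' * (x' ⬝ᵥ x' - x ⬝ᵥ x') * (enorm3 (x' - x))⁻¹ / ((x' - x) ⬝ᵥ (x' - x))
                  * (x' 2 - x 2)] i :=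
    fun i => (pdX_eq' (gradE_x y x x' M' hx hux) i).trans (dCLM_single _ i)
  simp only [poisson]
  simp only [EJy, EJx, EEy, EEx]
  set r := enorm3 x with hr_def
  set s := enorm3 (x' - x) with hs_def
  set X := x ⬝ᵥ x with hX_def
  set S := (x' - x) ⬝ᵥ (x' - x) with hS_def
  simp only [dotProduct, Fin.sum_univ_three, Matrix.cons_val_zero, Matrix.cons_val_one,
    Matrix.head_cons, Matrix.cons_val_two, Matrix.tail_cons, Pi.sub_apply]
  field_simp
  rw [hX_def, hS_def]
  simp only [dotProduct, Fin.sum_univ_three, Pi.sub_apply]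
  ring
end

section
/- For all x, y, x' ∈ ℝ³ with x ≠ 0 and x ≠ x', and any ℳ' ∈ ℝ, the following identity holds: ‖(x − x'/2)×y‖² + (1/4)(x'·y)² + (x'·(x − x'/2))·(1/‖x‖ − ℳ'/‖x'−x‖) = [‖x×y‖² − x'·(y×(x×y) − x/‖x‖)] + ℳ'((x'−x)·x')/‖x'−x‖ + (‖x'‖²/2)·(‖y‖²/2 − 1/‖x‖ − ℳ'/‖x'−x‖). In other words, the Euler integral in symmetric form decomposes as E = E₀ + E₁ + E₂, where E₀ = ‖x×y‖² − x'·L with L = y×(x×y) − x/‖x‖, E₁ = ℳ'((x'−x)·x')/‖x'−x‖, and E₂ = (‖x'‖²/2)·J with J the asymmetric two-centre Hamiltonian. -/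
open Matrix

lemma enorm3_pos_s3 {v : Fin 3 → ℝ} (h : v ≠ 0) : 0 < enorm3 v :=
  Real.sqrt_pos.mpr
    (lt_of_le_of_ne (Finset.sum_nonneg fun i _ => mul_self_nonneg _)
      (Ne.symm (fun h0 => h (dotProduct_self_eq_zero.mp h0))))

lemma enorm3_sq (v : Fin 3 → ℝ) : (enorm3 v) ^ 2 = v ⬝ᵥ v :=
  Real.sq_sqrt (Finset.sum_nonneg fun i _ => mul_self_nonneg _)

/-- The Euler integral in symmetric form decomposes as E = E₀ + E₁ + E₂, where
E₀ = ‖x×y‖² − x'·L with L = y×(x×y) − x/‖x‖ the eccentricity vector,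
E₁ = ℳ'((x'−x)·x')/‖x'−x‖, and E₂ = (‖x'‖²/2)·J with J the asymmetric
two-centre Hamiltonian. -/
theorem euler_integral_decomposition
    (x y x' : Fin 3 → ℝ) (M' : ℝ) (hx : x ≠ 0) (hxx' : x ≠ x') :
    ((crossProduct (x - (2:ℝ)⁻¹ • x')) y ⬝ᵥ (crossProduct (x - (2:ℝ)⁻¹ • x')) y)
      + (1 / 4) * (x' ⬝ᵥ y) ^ 2
      + (x' ⬝ᵥ (x - (2:ℝ)⁻¹ • x')) * (1 / enorm3 x - M' / enorm3 (x' - x))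
    = (((crossProduct x) y ⬝ᵥ (crossProduct x) y)
        - (x' ⬝ᵥ ((crossProduct y) ((crossProduct x) y) - (enorm3 x)⁻¹ • x)))
      + M' * (((x' - x) ⬝ᵥ x') / enorm3 (x' - x))
      + ((enorm3 x') ^ 2 / 2) * ((y ⬝ᵥ y) / 2 - 1 / enorm3 x - M' / enorm3 (x' - x)) := by
  have ha : 0 < enorm3 x := enorm3_pos_s3 hx
  have hb : 0 < enorm3 (x' - x) := enorm3_pos_s3 (sub_ne_zero.mpr (Ne.symm hxx'))
  have hc := enorm3_sq x'
  rw [hc]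
  simp only [crossProduct, dotProduct, Fin.sum_univ_three, LinearMap.mk₂_apply,
    Pi.sub_apply, Pi.smul_apply, smul_eq_mul, Matrix.cons_val_zero, Matrix.cons_val_one,
    Matrix.head_cons, Matrix.cons_val_two, Matrix.tail_cons]
  field_simp
  ring
end

section
/- Let 0 < r < 2 and define E₀(G, g) = G² + r·√(1−G²)·cos g for G ∈ [−1, 1] and g ∈ ℝ. Then the range of E₀ over [−1, 1] × ℝ is exactly the closed interval [−r, 1 + r²/4]; that is, the level set {(G, g) : E₀(G, g) = 𝓔} is nonempty if and only if 𝓔 ∈ [−r, 1 + r²/4]. -/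
/-- For 0 < r < 2, the range of the planar Euler integral E₀(G,g) = G² + r√(1−G²)cos g
over [−1,1] × ℝ is exactly [−r, 1 + r²/4]: the level set {E₀ = 𝓔} is nonempty iff
𝓔 ∈ [−r, 1 + r²/4]. -/
theorem E0_range (r : ℝ) (hr0 : 0 < r) (hr2 : r < 2) :
    (fun P : ℝ × ℝ => P.1 ^ 2 + r * Real.sqrt (1 - P.1 ^ 2) * Real.cos P.2) ''
        (Set.Icc (-1 : ℝ) 1 ×ˢ (Set.univ : Set ℝ)) = Set.Icc (-r) (1 + r ^ 2 / 4) := by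
  set f : ℝ × ℝ → ℝ := fun P => P.1 ^ 2 + r * Real.sqrt (1 - P.1 ^ 2) * Real.cos P.2
  have hcont : Continuous f := by
    apply Continuous.add
    · exact (continuous_fst.pow 2)
    · exact ((continuous_const.mul ((continuous_const.sub (continuous_fst.pow 2)).sqrt)).mul
        (Real.continuous_cos.comp continuous_snd))
  apply Set.Subset.antisymm
  · -- bounds
    rintro _ ⟨⟨G, g⟩, ⟨hG, -⟩, rfl⟩
    simp only [Set.mem_Icc] at hG ⊢
    set s := Real.sqrt (1 - G ^ 2) with hs
    have hG2 : G ^ 2 ≤ 1 := by nlinarith [hG.1, hG.2]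
    have hs0 : 0 ≤ s := Real.sqrt_nonneg _
    have hssq : s ^ 2 = 1 - G ^ 2 := Real.sq_sqrt (by linarith)
    have hs1 : s ≤ 1 := by nlinarith
    have hcos := Real.neg_one_le_cos g
    have hcos' := Real.cos_le_one g
    have h1 : -(r * s) ≤ r * s * Real.cos g := by nlinarith [mul_nonneg hr0.le hs0]
    have h2 : r * s * Real.cos g ≤ r * s := by nlinarith [mul_nonneg hr0.le hs0]
    constructor
    · have : -r ≤ G ^ 2 - r * s := by nlinarith
      show -r ≤ G ^ 2 + r * s * Real.cos g
      linarith
    · have : G ^ 2 + r * s ≤ 1 + r ^ 2 / 4 := by nlinarith [sq_nonneg (s - r / 2)]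
      show G ^ 2 + r * s * Real.cos g ≤ 1 + r ^ 2 / 4
      linarith
  · -- preconnected image contains endpoints
    have hconv : Convex ℝ (Set.Icc (-1 : ℝ) 1 ×ˢ (Set.univ : Set ℝ)) :=
      (convex_Icc _ _).prod convex_univ
    have hpre : IsPreconnected (f '' (Set.Icc (-1 : ℝ) 1 ×ˢ (Set.univ : Set ℝ))) :=
      hconv.isPreconnected.image f hcont.continuousOn
    have hmemlo : (-r) ∈ f '' (Set.Icc (-1 : ℝ) 1 ×ˢ (Set.univ : Set ℝ)) := by
      refine ⟨(0, Real.pi), ⟨⟨by norm_num, by norm_num⟩, trivial⟩, ?_⟩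
      simp [f, Real.cos_pi]
    have hmemhi : (1 + r ^ 2 / 4) ∈ f '' (Set.Icc (-1 : ℝ) 1 ×ˢ (Set.univ : Set ℝ)) := by
      refine ⟨(Real.sqrt (1 - r ^ 2 / 4), 0), ⟨⟨?_, ?_⟩, trivial⟩, ?_⟩
      · have := Real.sqrt_nonneg (1 - r ^ 2 / 4); linarith
      · exact Real.sqrt_le_one.mpr (by nlinarith)
      · have h1 : (0:ℝ) ≤ 1 - r ^ 2 / 4 := by nlinarith
        have h2 : Real.sqrt (1 - r ^ 2 / 4) ^ 2 = 1 - r ^ 2 / 4 := Real.sq_sqrt h1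
        have h3 : 1 - (1 - r ^ 2 / 4) = (r / 2) ^ 2 := by ring
        have h4 : Real.sqrt (1 - (1 - r ^ 2 / 4)) = r / 2 := by
          rw [h3, Real.sqrt_sq (by linarith)]
        simp only [f, Real.cos_zero, mul_one, h2, h4]
        ring
    exact hpre.Icc_subset hmemlo hmemhi
end

section
/- For every 𝓔 with 0 < 𝓔 < 1, the period integral T(𝓔) = 4𝓔·∫₀^{arccos 𝓔} dg / (cos²g · √(1 − 𝓔²/cos²g)) equals 2π. Equivalently, under the change of variable w = (𝓔/√(1−𝓔²))·tan g, the integral transforms into 4·∫₀¹ dw/√(1−w²) = 2π. -/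
/-!
With w = E tan g / √(1 - E²) one has 1 - w² = (1 - E²/cos²g)/(1 - E²), so the integrand
E / (cos²g √(1 - E²/cos²g)) is the derivative of arcsin w, and w runs from 0 to 1 as g runs
from 0 to arccos E. Both integrals are therefore arcsin 1 - arcsin 0 = π/2. The integrands blow
up at the upper endpoint, but they are nonnegative derivatives, which makes them integrable.
-/

open Real

theorem integral_eq_sub_of_hasDerivAt_of_nonneg {f f' : ℝ → ℝ} {a b : ℝ} (hab : a ≤ b)
    (hcont : ContinuousOn f (Set.Icc a b)) (hderiv : ∀ x ∈ Set.Ioo a b, HasDerivAt f (f' x) x)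
    (hpos : ∀ x ∈ Set.Ioo a b, 0 ≤ f' x) :
    ∫ x in a..b, f' x = f b - f a :=
  intervalIntegral.integral_eq_sub_of_hasDerivAt_of_le hab hcont hderiv <|
    (intervalIntegrable_iff_integrableOn_Ioc_of_le hab).2 <|
      intervalIntegral.integrableOn_deriv_of_nonneg hcont hderiv hpos

theorem integral_one_div_sqrt_one_sub_sq : ∫ w in (0 : ℝ)..1, 1 / √(1 - w ^ 2) = π / 2 := by
  rw [integral_eq_sub_of_hasDerivAt_of_nonneg zero_le_one continuous_arcsin.continuousOn
    (fun w hw ↦ hasDerivAt_arcsin (by linarith [hw.1]) hw.2.ne) (fun _ _ ↦ by positivity)]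
  simp

theorem hasDerivAt_arcsin_const_mul_tan {c g : ℝ} (hcos : cos g ≠ 0) (hlt : |c * tan g| < 1) :
    HasDerivAt (fun x ↦ arcsin (c * tan x)) (c / (cos g ^ 2 * √(1 - (c * tan g) ^ 2))) g := by
  obtain ⟨hlo, hhi⟩ := abs_lt.1 hlt
  refine ((hasDerivAt_arcsin hlo.ne' hhi.ne).comp g
    ((hasDerivAt_tan hcos).const_mul c)).congr_deriv ?_
  field_simp

theorem one_sub_sq_div_sqrt_mul_tan {E g : ℝ} (hE : E ^ 2 < 1) (hcos : cos g ≠ 0) :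
    1 - (E / √(1 - E ^ 2) * tan g) ^ 2 = (1 - E ^ 2 / cos g ^ 2) / (1 - E ^ 2) := by
  have hE' : 1 - E ^ 2 ≠ 0 := by linarith
  rw [div_mul_eq_mul_div, div_pow, sq_sqrt (by linarith), tan_eq_sin_div_cos]
  field_simp
  linear_combination -E ^ 2 * sin_sq_add_cos_sq g

theorem hasDerivAt_arcsin_div_sqrt_mul_tan {E g : ℝ} (h : E ^ 2 < cos g ^ 2) :
    HasDerivAt (fun x ↦ arcsin (E / √(1 - E ^ 2) * tan x))
      (E * (1 / (cos g ^ 2 * √(1 - E ^ 2 / cos g ^ 2)))) g := by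
  have hcos : cos g ≠ 0 := fun h0 ↦ by nlinarith [sq_nonneg E, h0]
  have hE : E ^ 2 < 1 := h.trans_le (cos_sq_le_one g)
  have hpos : 0 < 1 - E ^ 2 / cos g ^ 2 := by
    rw [sub_pos, div_lt_one (by positivity)]; exact h
  have hsq := one_sub_sq_div_sqrt_mul_tan hE hcos
  have hlt : |E / √(1 - E ^ 2) * tan g| < 1 := by
    rw [← sq_lt_one_iff_abs_lt_one, ← sub_pos, hsq]
    exact div_pos hpos (by linarith)
  convert hasDerivAt_arcsin_const_mul_tan hcos hlt using 1
  have : 0 < √(1 - E ^ 2) := sqrt_pos.2 (by linarith)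
  rw [hsq, sqrt_div' _ (by linarith)]
  field_simp

theorem integral_period_integrand_eq_pi_div_two {E : ℝ} (h0 : 0 < E) (h1 : E < 1) :
    ∫ g in (0 : ℝ)..arccos E, E * (1 / (cos g ^ 2 * √(1 - E ^ 2 / cos g ^ 2))) = π / 2 := by
  have ha : arccos E < π / 2 := arccos_lt_pi_div_two.2 h0
  have hcos : ∀ g ∈ Set.Icc 0 (arccos E), 0 < cos g := fun g hg ↦
    cos_pos_of_mem_Ioo ⟨by linarith [pi_pos, hg.1], hg.2.trans_lt ha⟩
  have hcosE : ∀ g ∈ Set.Ioo 0 (arccos E), E < cos g := fun g hg ↦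
    cos_arccos (by linarith) h1.le ▸ cos_lt_cos_of_nonneg_of_le_pi_div_two hg.1.le ha.le hg.2
  have hcont : ContinuousOn (fun x ↦ arcsin (E / √(1 - E ^ 2) * tan x)) (Set.Icc 0 (arccos E)) :=
    continuous_arcsin.comp_continuousOn
      (continuousOn_const.mul (continuousOn_tan.mono fun g hg ↦ (hcos g hg).ne'))
  have hend : E / √(1 - E ^ 2) * tan (arccos E) = 1 := by
    have : 0 < √(1 - E ^ 2) := sqrt_pos.2 (by nlinarith)
    rw [tan_arccos]
    field_simp
  rw [integral_eq_sub_of_hasDerivAt_of_nonneg (arccos_pos.2 h1).le hcont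
    (fun g hg ↦ hasDerivAt_arcsin_div_sqrt_mul_tan
      (pow_lt_pow_left₀ (hcosE g hg) h0.le two_ne_zero))
    (fun _ _ ↦ by positivity), hend]
  simp

/-- The period integral T(𝓔) = 4𝓔·∫₀^{arccos 𝓔} dg/(cos²g·√(1 − 𝓔²/cos²g)) equals 2π
for every 0 < 𝓔 < 1; equivalently, after the change of variable
w = (𝓔/√(1−𝓔²))·tan g, it becomes 4·∫₀¹ dw/√(1−w²) = 2π. -/
theorem period_integral_eq_two_pi (E : ℝ) (h0 : 0 < E) (h1 : E < 1) :
    (4 * E * ∫ g in (0:ℝ)..(Real.arccos E),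
        1 / ((Real.cos g) ^ 2 * Real.sqrt (1 - E ^ 2 / (Real.cos g) ^ 2)) = 2 * π)
    ∧ (4 * ∫ w in (0:ℝ)..1, 1 / Real.sqrt (1 - w ^ 2) = 2 * π) := by
  constructor
  · rw [mul_assoc, ← intervalIntegral.integral_const_mul,
      integral_period_integrand_eq_pi_div_two h0 h1]
    ring
  · rw [integral_one_div_sqrt_one_sub_sq]
    ring
end
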